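/- arXiv:2405.20848 — 3 statements merged into one kernel-verified Lean document; each statement's English description precedes it below -/
import Mathlib

section
/- For any finite family of sets, the function C(s) = log(|⋃_{r∈s} X_r| + c) with constant c ≥ 1 is a monotone submodular set function on subsets s of the index set. -/
/-!
The coverage `s ↦ |⋃_{r ∈ s} X_r|` is monotone, and adding `r` to `s` gains `|X_r \ ⋃_{s} X|`,
which shrinks as `s` grows. Composing with the increasing concave map `x ↦ log (x + c)` keeps
both properties, since `log (b + d) - log b` decreases in `b > 0` and increases in `d ≥ 0`.
-/

namespace Finset

variable {ρ α : Type*} [DecidableEq α] (X : ρ → Finset α)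

theorem card_biUnion_insert [DecidableEq ρ] (r : ρ) (t : Finset ρ) :
    ((insert r t).biUnion X).card = (t.biUnion X).card + (X r \ t.biUnion X).card := by
  rw [biUnion_insert, ← card_sdiff_add_card, add_comm]

theorem card_biUnion_mono {s t : Finset ρ} (hst : s ⊆ t) :
    (s.biUnion X).card ≤ (t.biUnion X).card :=
  card_le_card (biUnion_subset_biUnion_of_subset_left X hst)

theorem card_sdiff_biUnion_le {s t : Finset ρ} (hst : s ⊆ t) (r : ρ) :
    (X r \ t.biUnion X).card ≤ (X r \ s.biUnion X).card :=
  card_le_card (sdiff_subset_sdiff le_rfl (biUnion_subset_biUnion_of_subset_left X hst))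

end Finset

theorem Real.log_add_sub_log_le {a b d e : ℝ} (ha : 0 < a) (hab : a ≤ b) (hd : 0 ≤ d)
    (hde : d ≤ e) : Real.log (b + d) - Real.log b ≤ Real.log (a + e) - Real.log a := by
  have hb : 0 < b := ha.trans_le hab
  rw [← Real.log_div (by positivity) hb.ne', ← Real.log_div (by linarith) ha.ne']
  apply Real.log_le_log (by positivity)
  rw [div_le_div_iff₀ hb ha]
  nlinarith

/-- C(s) = log(|⋃_{r∈s} X_r| + c) with c ≥ 1 is monotone and submodular. -/
theorem log_coverage_monotone_submodular {ρ α : Type*} [DecidableEq ρ] [DecidableEq α]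
    (X : ρ → Finset α) (c : ℝ) (hc : 1 ≤ c) :
    (∀ s t : Finset ρ, s ⊆ t →
      Real.log ((s.biUnion X).card + c) ≤ Real.log ((t.biUnion X).card + c)) ∧
    (∀ (s t : Finset ρ), s ⊆ t → ∀ r : ρ,
      Real.log (((insert r t).biUnion X).card + c) - Real.log ((t.biUnion X).card + c) ≤
        Real.log (((insert r s).biUnion X).card + c) - Real.log ((s.biUnion X).card + c)) := by
  refine ⟨fun s t hst => ?_, fun s t hst r => ?_⟩
  · have := Finset.card_biUnion_mono X hst
    exact Real.log_le_log (by positivity) (by gcongr)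
  · have hcard : ((s.biUnion X).card : ℝ) ≤ (t.biUnion X).card := by
      exact_mod_cast Finset.card_biUnion_mono X hst
    have hmarginal : ((X r \ t.biUnion X).card : ℝ) ≤ (X r \ s.biUnion X).card := by
      exact_mod_cast Finset.card_sdiff_biUnion_le X hst r
    simp only [Finset.card_biUnion_insert, Nat.cast_add, add_right_comm _ _ c]
    exact Real.log_add_sub_log_le (by positivity) (by linarith) (by positivity) hmarginal
end

section
/- For a supermodular set function f on a finite ground set Γ and any reference set r⁽ᵗ⁾ ⊆ Γ, the expression L¹(r) = f(r⁽ᵗ⁾) − Σ_{j∈r⁽ᵗ⁾∖r} f(j | r⁽ᵗ⁾∖{j}) + Σ_{j∈r∖r⁽ᵗ⁾} f(j | ∅) satisfies L¹(r) ≤ f(r) for all r ⊆ Γ, with equality when r = r⁽ᵗ⁾. -/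
/-!
Both halves of the bound come from telescoping `f` along a chain of single insertions and comparing
each marginal with a marginal at a nested set. Going up from `r ∩ rt` to `r`, every marginal
`f(j | ·)` is at least `f(j | ∅)`; going down from `rt` to `r ∩ rt`, every marginal is at most
`f(j | rt ∖ {j})`. Chaining the two estimates through `f (r ∩ rt)` gives `L¹(r) ≤ f r`.
-/

open Finset

def Supermodular {ι G : Type*} [DecidableEq ι] [Sub G] [LE G] (f : Finset ι → G) : Prop :=
  ∀ s t : Finset ι, s ⊆ t → ∀ j : ι, f (insert j s) - f s ≤ f (insert j t) - f t

namespace Supermodular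

variable {ι G : Type*} [DecidableEq ι] [AddCommGroup G] [PartialOrder G] [IsOrderedAddMonoid G]
  {f : Finset ι → G}

theorem sum_marginal_empty_le_sub (hf : Supermodular f) (s : Finset ι) {d : Finset ι}
    (hd : Disjoint s d) : ∑ j ∈ d, (f {j} - f ∅) ≤ f (s ∪ d) - f s := by
  induction d using Finset.induction_on with
  | empty => simp
  | insert a d had ih =>
    have has : a ∉ s ∪ d := by
      simp only [mem_union, not_or]
      exact ⟨disjoint_right.mp hd (mem_insert_self a d), had⟩
    have ih := ih (hd.mono_right (subset_insert a d))
    have hmarg : f {a} - f ∅ ≤ f (insert a (s ∪ d)) - f (s ∪ d) :=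
      hf ∅ (s ∪ d) (empty_subset _) a
    calc ∑ j ∈ insert a d, (f {j} - f ∅)
        = (f {a} - f ∅) + ∑ j ∈ d, (f {j} - f ∅) := sum_insert had
      _ ≤ (f (insert a (s ∪ d)) - f (s ∪ d)) + (f (s ∪ d) - f s) := add_le_add hmarg ih
      _ = f (s ∪ insert a d) - f s := by rw [union_insert]; abel

theorem sub_le_sum_marginal_erase (hf : Supermodular f) {t d : Finset ι} (hd : d ⊆ t) :
    f t - f (t \ d) ≤ ∑ j ∈ d, (f (insert j (t.erase j)) - f (t.erase j)) := by
  induction d using Finset.induction_on with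
  | empty => simp
  | insert a d had ih =>
    have hat : a ∈ t := hd (mem_insert_self a d)
    have ih := ih ((subset_insert a d).trans hd)
    have hremove : insert a (t \ insert a d) = t \ d := by
      rw [sdiff_insert, insert_erase (mem_sdiff.mpr ⟨hat, had⟩)]
    -- `t \ insert a d ⊆ t.erase a`, so the marginal of `a` can only grow
    have hmarg : f (t \ d) - f (t \ insert a d) ≤ f (insert a (t.erase a)) - f (t.erase a) := by
      rw [← hremove]
      refine hf _ _ (fun x hx => ?_) a
      simp only [mem_sdiff, mem_insert, not_or] at hx
      exact mem_erase.mpr ⟨hx.2.1, hx.1⟩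
    calc f t - f (t \ insert a d)
        = (f (t \ d) - f (t \ insert a d)) + (f t - f (t \ d)) := by abel
      _ ≤ (f (insert a (t.erase a)) - f (t.erase a))
            + ∑ j ∈ d, (f (insert j (t.erase j)) - f (t.erase j)) := add_le_add hmarg ih
      _ = _ := by rw [sum_insert had]

end Supermodular

/-- First modular lower bound of a supermodular function:
L¹(r) = f(rt) − Σ_{j∈rt∖r} f(j | rt∖{j}) + Σ_{j∈r∖rt} f(j | ∅) ≤ f(r),
with equality when r = rt. -/
theorem supermodular_lower_bound_one {ι : Type*} [DecidableEq ι]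
    (f : Finset ι → ℝ)
    (hsup : ∀ (s t : Finset ι), s ⊆ t → ∀ j : ι,
      f (insert j s) - f s ≤ f (insert j t) - f t)
    (rt : Finset ι) :
    (∀ r : Finset ι,
      f rt - (∑ j ∈ rt \ r, (f (insert j (rt.erase j)) - f (rt.erase j)))
        + (∑ j ∈ r \ rt, (f {j} - f ∅)) ≤ f r) ∧
    (f rt - (∑ j ∈ rt \ rt, (f (insert j (rt.erase j)) - f (rt.erase j)))
        + (∑ j ∈ rt \ rt, (f {j} - f ∅)) = f rt) := by
  refine ⟨fun r => ?_, by simp⟩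
  have hdown := Supermodular.sub_le_sum_marginal_erase hsup (sdiff_subset (s := rt) (t := r))
  have hup := Supermodular.sum_marginal_empty_le_sub hsup (r ∩ rt) (disjoint_sdiff_inter r rt).symm
  rw [sdiff_sdiff_right_self, inf_eq_inter, inter_comm] at hdown
  rw [union_comm, sdiff_union_inter] at hup
  linarith
end

section
/- For a supermodular set function f on a finite ground set Γ and any reference set r⁽ᵗ⁾ ⊆ Γ, the expression L²(r) = f(r⁽ᵗ⁾) − Σ_{j∈r⁽ᵗ⁾∖r} f(j | Γ∖{j}) + Σ_{j∈r∖r⁽ᵗ⁾} f(j | r⁽ᵗ⁾) satisfies L²(r) ≤ f(r) for all r ⊆ Γ, with equality at r = r⁽ᵗ⁾. -/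
/-!
Growing `rt` to `r ∪ rt` one element at a time gains at least the marginals at `rt`, and shrinking
`r ∪ rt` to `r` one element at a time loses at most the marginals at `Γ \ {j}`: both because
marginal gains increase along inclusion.
-/

open Finset

section Marginal

variable {ι β : Type*} [DecidableEq ι] [AddCommGroup β] [PartialOrder β] [IsOrderedAddMonoid β]

def marginal (f : Finset ι → β) (j : ι) (s : Finset ι) : β := f (insert j s) - f s

variable {f : Finset ι → β}

theorem add_sum_marginal_le (hf : ∀ j, Monotone (marginal f j)) (s b : Finset ι) :
    f b + ∑ j ∈ s, marginal f j b ≤ f (s ∪ b) := by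
  induction s using Finset.induction_on with
  | empty => simp
  | @insert a s ha ih =>
    calc f b + ∑ j ∈ insert a s, marginal f j b
        = (f b + ∑ j ∈ s, marginal f j b) + marginal f a b := by rw [sum_insert ha]; abel
      _ ≤ f (s ∪ b) + marginal f a (s ∪ b) := add_le_add ih (hf a subset_union_right)
      _ = f (insert a s ∪ b) := by rw [marginal, add_sub_cancel, insert_union]

theorem sub_le_sum_marginal_erase (hf : ∀ j, Monotone (marginal f j)) {s t u : Finset ι}
    (hst : s ⊆ t) (htu : t ⊆ u) :
    f t - f (t \ s) ≤ ∑ j ∈ s, marginal f j (u.erase j) := by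
  induction s using Finset.induction_on with
  | empty => simp
  | @insert a s ha ih =>
    have hs : s ⊆ t := (subset_insert a s).trans hst
    have hat : a ∈ t \ s := mem_sdiff.mpr ⟨hst (mem_insert_self a s), ha⟩
    calc f t - f (t \ insert a s)
        = (f t - f (t \ s)) + marginal f a ((t \ s).erase a) := by
          rw [sdiff_insert, marginal, insert_erase hat]; abel
      _ ≤ ∑ j ∈ s, marginal f j (u.erase j) + marginal f a (u.erase a) :=
          add_le_add (ih hs) (hf a (erase_subset_erase a (sdiff_subset.trans htu)))
      _ = ∑ j ∈ insert a s, marginal f j (u.erase j) := by rw [sum_insert ha, add_comm]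

end Marginal

/-- Second modular lower bound of a supermodular function:
L²(r) = f(rt) − Σ_{j∈rt∖r} f(j | Γ∖{j}) + Σ_{j∈r∖rt} f(j | rt) ≤ f(r),
with equality when r = rt. -/
theorem supermodular_lower_bound_two {ι : Type*} [Fintype ι] [DecidableEq ι]
    (f : Finset ι → ℝ)
    (hsup : ∀ (s t : Finset ι), s ⊆ t → ∀ j : ι,
      f (insert j s) - f s ≤ f (insert j t) - f t)
    (rt : Finset ι) :
    (∀ r : Finset ι,
      f rt - (∑ j ∈ rt \ r, (f (insert j (Finset.univ.erase j)) - f (Finset.univ.erase j)))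
        + (∑ j ∈ r \ rt, (f (insert j rt) - f rt)) ≤ f r) ∧
    (f rt - (∑ j ∈ rt \ rt, (f (insert j (Finset.univ.erase j)) - f (Finset.univ.erase j)))
        + (∑ j ∈ rt \ rt, (f (insert j rt) - f rt)) = f rt) := by
  have hf : ∀ j, Monotone (marginal f j) := fun j s t hst => hsup s t hst j
  refine ⟨fun r => ?_, by simp⟩
  have hgrow := add_sum_marginal_le hf (r \ rt) rt
  have hshrink := sub_le_sum_marginal_erase hf (s := rt \ r) (t := r ∪ rt) (u := univ)
    (sdiff_subset.trans subset_union_right) (subset_univ _)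
  rw [sdiff_union_self_eq_union] at hgrow
  have hr : (r ∪ rt) \ (rt \ r) = r := by grind
  rw [hr] at hshrink
  simp only [marginal] at hgrow hshrink
  linarith
end
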